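/- arXiv:math/0602632 — 7 statements merged into one kernel-verified Lean document; each statement's English description precedes it below -/
import Mathlib

section
/- Let p be a prime and let R be a differentiably simple commutative ring of characteristic p > 0 (i.e., p^k·1 = 0 in R for some k ≥ 1). Then: (a) R is a local ring with maximal ideal m; (b) p·1 = 0 in R, so R is an 𝔽_p-algebra; (c) x^p = 0 for every x ∈ m; (d) the intersection ∩_{i≥1} m^i equals 0. If, in addition, R is Noetherian, then there exists a subfield k' of R with R = k' + m, and any such subfield is isomorphic to the residue field R/m. -/
/-- A derivation of a ring: an additive map satisfying the Leibniz rule. -/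
def IsDerivation {R : Type*} [Ring R] (δ : R → R) : Prop :=
  (∀ a b : R, δ (a + b) = δ a + δ b) ∧ (∀ a b : R, δ (a * b) = δ a * b + a * δ b)

/-- A commutative ring is differentiably simple if `0` and `R` are its only
differential ideals. -/
def DiffSimple (R : Type*) [CommRing R] : Prop :=
  ∀ I : Ideal R, (∀ δ : R → R, IsDerivation δ → ∀ x ∈ I, δ x ∈ I) → I = ⊥ ∨ I = ⊤

namespace DSaux

variable {R : Type*} [CommRing R] {δ : R → R}

lemma dzero (h : IsDerivation δ) : δ 0 = 0 := by
  have := h.1 0 0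
  simp only [add_zero] at this
  exact (left_eq_add.mp this)

lemma done' (h : IsDerivation δ) : δ 1 = 0 := by
  have := h.2 1 1
  simp only [mul_one, one_mul] at this
  exact (left_eq_add.mp this)

lemma dnat (h : IsDerivation δ) (n : ℕ) : δ (n : R) = 0 := by
  induction n with
  | zero => simpa using dzero h
  | succ k ih => rw [Nat.cast_succ, h.1, ih, done' h, add_zero]

lemma dpow (h : IsDerivation δ) (x : R) : ∀ n : ℕ, δ (x ^ (n + 1)) = (n + 1) • (x ^ n * δ x) := by
  intro n
  induction n with
  | zero => simp
  | succ k ih =>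
    have h2 : x ^ (k + 2) = x ^ (k + 1) * x := by ring
    rw [h2, h.2, ih, smul_mul_assoc, succ_nsmul]
    ring

end DSaux

section Main

variable {R : Type*} [CommRing R] [Nontrivial R]

open DSaux

lemma pzero (p : ℕ) (hp : p.Prime) (hchar : ∃ k : ℕ, 1 ≤ k ∧ (p : R) ^ k = 0)
    (hds : DiffSimple R) : (p : R) = 0 := by
  set I : Ideal R := Ideal.span {(p : R)} with hI
  have hdiff : ∀ δ : R → R, IsDerivation δ → ∀ x ∈ I, δ x ∈ I := by
    intro δ hδ x hx
    rw [hI, Ideal.mem_span_singleton] at hx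
    obtain ⟨c, rfl⟩ := hx
    rw [hδ.2, dnat hδ]
    rw [hI, Ideal.mem_span_singleton]
    exact ⟨δ c, by ring⟩
  rcases hds I hdiff with h | h
  · have : (p : R) ∈ I := Ideal.subset_span rfl
    rw [h] at this
    simpa using this
  · exfalso
    have hu : IsUnit (p : R) := by
      rw [← Ideal.span_singleton_eq_top, ← hI]; exact h
    obtain ⟨k, hk1, hk⟩ := hchar
    have : IsUnit ((p : R) ^ k) := hu.pow k
    rw [hk] at this
    exact not_isUnit_zero this

lemma pow_eq_zero_of_ne_top (p : ℕ) (hp : p.Prime) (hp0 : (p : R) = 0)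
    (hds : DiffSimple R) (I : Ideal R) (hI : I ≠ ⊤) : ∀ x ∈ I, x ^ p = 0 := by
  set J : Ideal R := Ideal.span ((fun y => y ^ p) '' (I : Set R)) with hJ
  have hdp : ∀ (δ : R → R), IsDerivation δ → ∀ y : R, δ (y ^ p) = 0 := by
    intro δ hδ y
    obtain ⟨q, hq⟩ : ∃ q, p = q + 1 := ⟨p - 1, (Nat.succ_pred_eq_of_pos hp.pos).symm⟩
    rw [hq, dpow hδ, nsmul_eq_mul, ← hq, hp0, zero_mul]
  have hdiff : ∀ δ : R → R, IsDerivation δ → ∀ x ∈ J, δ x ∈ J := by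
    intro δ hδ x hx
    rw [hJ] at hx ⊢
    induction hx using Submodule.span_induction with
    | mem x h =>
      obtain ⟨y, _, rfl⟩ := h
      rw [hdp δ hδ y]; exact zero_mem _
    | zero => rw [dzero hδ]; exact zero_mem _
    | add a b ha hb iha ihb => rw [hδ.1]; exact add_mem iha ihb
    | smul r a ha iha =>
      rw [smul_eq_mul, hδ.2]
      exact add_mem (Ideal.mul_mem_left _ _ ha)
        (Ideal.mul_mem_left _ _ iha)
  have hJI : J ≤ I := by
    rw [hJ, Ideal.span_le]
    rintro _ ⟨y, hy, rfl⟩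
    exact Ideal.pow_mem_of_mem I hy p hp.pos
  rcases hds J hdiff with h | h
  · intro x hx
    have : x ^ p ∈ J := Ideal.subset_span ⟨x, hx, rfl⟩
    rw [h] at this
    simpa using this
  · exact absurd (top_le_iff.mp (h ▸ hJI)) hI


lemma deriv_mem_pow (m : Ideal R) {δ : R → R} (hδ : IsDerivation δ) :
    ∀ n : ℕ, ∀ x ∈ m ^ (n + 1), δ x ∈ m ^ n := by
  intro n
  induction n with
  | zero => intro x _; simp
  | succ k ih =>
    intro x hx
    rw [pow_succ] at hx
    refine Submodule.mul_induction_on hx ?_ ?_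
    · intro a ha b hb
      rw [hδ.2]
      refine add_mem ?_ ?_
      · have := ih a ha
        have h2 : δ a * b ∈ m ^ k * m := Ideal.mul_mem_mul this hb
        rwa [← pow_succ] at h2
      · exact Ideal.mul_mem_right _ _ ha
    · intro x y hx hy
      rw [hδ.1]
      exact add_mem hx hy

theorem main_parts (p : ℕ) (hp : p.Prime) (hchar : ∃ k : ℕ, 1 ≤ k ∧ (p : R) ^ k = 0)
    (hds : DiffSimple R) :
    (p : R) = 0 ∧
    ∃ m : Ideal R, m.IsMaximal ∧ (∀ m' : Ideal R, m'.IsMaximal → m' = m) ∧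
      (∀ x ∈ m, x ^ p = 0) ∧
      (⨅ i ∈ {i : ℕ | 1 ≤ i}, m ^ i) = ⊥ := by
  have hp0 : (p : R) = 0 := pzero p hp hchar hds
  refine ⟨hp0, ?_⟩
  obtain ⟨m, hm⟩ := Ideal.exists_maximal R
  have key : ∀ (I : Ideal R), I.IsMaximal → ∀ x ∈ I, x ^ p = 0 := fun I hI =>
    pow_eq_zero_of_ne_top p hp hp0 hds I hI.ne_top
  have huniq : ∀ m' : Ideal R, m'.IsMaximal → m' = m := by
    have hsub : ∀ (I J : Ideal R), I.IsMaximal → J.IsMaximal → I ≤ J := by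
      intro I J hI hJ x hx
      have : x ^ p ∈ J := by rw [key I hI x hx]; exact zero_mem _
      exact hJ.isPrime.mem_of_pow_mem p this
    intro m' hm'
    exact le_antisymm (hsub m' m hm' hm) (hsub m m' hm hm')
  refine ⟨m, hm, huniq, key m hm, ?_⟩
  set J : Ideal R := ⨅ i ∈ {i : ℕ | 1 ≤ i}, m ^ i with hJ
  have hmem : ∀ x : R, x ∈ J ↔ ∀ i : ℕ, 1 ≤ i → x ∈ m ^ i := by
    intro x
    simp [hJ, Submodule.mem_iInf, Set.mem_setOf_eq]
  have hdiff : ∀ δ : R → R, IsDerivation δ → ∀ x ∈ J, δ x ∈ J := by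
    intro δ hδ x hx
    rw [hmem] at hx ⊢
    intro i hi
    exact deriv_mem_pow m hδ i x (hx (i + 1) (by omega))
  rcases hds J hdiff with h | h
  · exact h
  · exfalso
    have : J ≤ m := by
      intro x hx
      have := (hmem x).mp hx 1 le_rfl
      simpa using this
    rw [h] at this
    exact hm.ne_top (top_le_iff.mp this)


open Polynomial in
theorem coeff_field_exists (p : ℕ) (hp : p.Prime) (hp0 : (p : R) = 0)
    (m : Ideal R) (hm : m.IsMaximal) (huniq : ∀ m' : Ideal R, m'.IsMaximal → m' = m)
    (hxp : ∀ x ∈ m, x ^ p = 0) :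
    ∃ K : Subring R, IsField K ∧ ∀ r : R, ∃ a ∈ K, ∃ b ∈ m, r = a + b := by
  haveI : CharP R p := (CharP.charP_iff_prime_eq_zero hp).mpr hp0
  haveI : ExpChar R p := ExpChar.prime hp
  -- nonunits are in m
  have hnon : ∀ x : R, ¬IsUnit x → x ∈ m := by
    intro x hx
    have : Ideal.span {x} ≠ ⊤ := by
      rw [Ne, Ideal.span_singleton_eq_top]; exact hx
    obtain ⟨M, hM, hxM⟩ := Ideal.exists_le_maximal _ this
    rw [huniq M hM] at hxM
    exact hxM (Ideal.subset_span rfl)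
  have hunit : ∀ x : R, x ∉ m → IsUnit x := fun x hx => by
    by_contra h; exact hx (hnon x h)
  have hmempow : ∀ x : R, x ^ p = 0 → x ∈ m := by
    intro x hx
    refine hm.isPrime.mem_of_pow_mem p ?_
    rw [hx]; exact zero_mem _
  set Rp : Subring R := (frobenius R p).range with hRp
  have hmemRp : ∀ x : R, x ^ p ∈ Rp := fun x => ⟨x, rfl⟩
  -- Rp is a field
  have hRpfield : IsField Rp := by
    refine ⟨⟨0, 1, fun h => zero_ne_one (congrArg Subtype.val h)⟩, mul_comm, ?_⟩
    rintro ⟨a, ha⟩ ha0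
    obtain ⟨x, rfl⟩ := ha
    have hxm : x ∉ m := by
      intro hxm
      apply ha0
      ext
      exact hxp x hxm
    obtain ⟨u, rfl⟩ := hunit x hxm
    refine ⟨⟨((u⁻¹ : Rˣ) : R) ^ p, hmemRp _⟩, ?_⟩
    ext
    show ((u : R)) ^ p * ((u⁻¹ : Rˣ) : R) ^ p = 1
    rw [← mul_pow, Units.mul_inv, one_pow]
  set S : Set (Subring R) := {K | Rp ≤ K ∧ IsField K} with hS
  have hRpS : Rp ∈ S := ⟨le_rfl, hRpfield⟩
  -- Zorn
  have hchain : ∀ c ⊆ S, IsChain (· ≤ ·) c → ∀ y ∈ c, ∃ ub ∈ S, ∀ z ∈ c, z ≤ ub := by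
    intro c hcS hc y hy
    refine ⟨sSup c, ⟨?_, ?_⟩, fun z hz => le_sSup hz⟩
    · exact le_trans (hcS hy).1 (le_sSup hy)
    · have hmemsup : ∀ x : R, x ∈ sSup c ↔ ∃ K ∈ c, x ∈ K := fun x =>
        Subring.mem_sSup_of_directedOn ⟨y, hy⟩ hc.directedOn
      refine ⟨⟨0, 1, fun h => zero_ne_one (congrArg Subtype.val h)⟩, mul_comm, ?_⟩
      rintro ⟨a, ha⟩ ha0
      obtain ⟨K, hKc, haK⟩ := (hmemsup a).mp ha
      obtain ⟨b, hb⟩ := (hcS hKc).2.mul_inv_cancel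
        (a := (⟨a, haK⟩ : K)) (fun h => ha0 (Subtype.ext (show a = (0 : R) from congrArg Subtype.val h)))
      have hb' : a * (b : R) = 1 := congrArg Subtype.val hb
      exact ⟨⟨(b : R), (hmemsup _).mpr ⟨K, hKc, b.2⟩⟩, Subtype.ext hb'⟩
  obtain ⟨K, hRpK, hKS, hKmax⟩ := zorn_le_nonempty₀ S hchain Rp hRpS
  refine ⟨K, hKS.2, ?_⟩
  by_contra hcon
  push_neg at hcon
  obtain ⟨t, ht⟩ := hcon
  -- t is not congruent to any element of K mod m
  have ht' : ∀ a ∈ K, t - a ∉ m := by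
    intro a ha hmem
    exact (ht a ha (t - a) hmem) (by ring)
  have hcK : t ^ p ∈ K := hKS.1 (hmemRp t)
  letI : Field K := IsField.toField hKS.2
  haveI : Fact (Nat.Prime p) := ⟨hp⟩
  set c : ↥K := ⟨t ^ p, hcK⟩ with hc
  have hnp : ∀ b : ↥K, (b : R) ^ p ≠ t ^ p := by
    intro b hb
    have : (t - (b : R)) ^ p = 0 := by
      rw [sub_pow_char, hb, sub_self]
    exact ht' (b : R) b.2 (hmempow _ this)
  have hirr : Irreducible (X ^ p - C c) := by
    apply X_pow_sub_C_irreducible_of_prime hp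
    intro b hb
    apply hnp b
    have h2 := congrArg Subtype.val hb
    simpa using h2
  haveI : Fact (Irreducible (X ^ p - C c)) := ⟨hirr⟩
  have heval : Polynomial.eval₂ K.subtype t (X ^ p - C c) = 0 := by
    simp [hc]
  set φ := AdjoinRoot.lift K.subtype t heval with hφ
  set K' : Subring R := φ.range with hK'
  have hKK' : K ≤ K' := by
    intro a ha
    exact ⟨AdjoinRoot.of _ ⟨a, ha⟩, AdjoinRoot.lift_of heval⟩
  have htK' : t ∈ K' := ⟨AdjoinRoot.root _, AdjoinRoot.lift_root heval⟩
  have hK'field : IsField K' := by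
    refine ⟨⟨0, 1, fun h => zero_ne_one (congrArg Subtype.val h)⟩, mul_comm, ?_⟩
    rintro ⟨a, ha⟩ ha0
    obtain ⟨z, rfl⟩ := ha
    have hz : z ≠ 0 := by
      intro h
      apply ha0
      ext
      show φ z = 0
      rw [h, map_zero]
    refine ⟨⟨φ z⁻¹, ⟨z⁻¹, rfl⟩⟩, ?_⟩
    ext
    show φ z * φ z⁻¹ = 1
    rw [← map_mul, mul_inv_cancel₀ hz, map_one]
  have hK'S : K' ∈ S := ⟨le_trans hRpK hKK', hK'field⟩
  have : K' ≤ K := hKmax hK'S hKK'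
  have htK : t ∈ K := this htK'
  exact (ht t htK 0 (zero_mem _)) (by ring)


theorem coeff_field_unique (p : ℕ) (hp : p.Prime)
    (m : Ideal R) (hxp : ∀ x ∈ m, x ^ p = 0)
    (K : Subring R) (hKf : IsField K) (hKm : ∀ r : R, ∃ a ∈ K, ∃ b ∈ m, r = a + b) :
    Nonempty (K ≃+* R ⧸ m) := by
  set ψ : K →+* R ⧸ m := (Ideal.Quotient.mk m).comp K.subtype with hψ
  have hinj : Function.Injective ψ := by
    rw [injective_iff_map_eq_zero]
    intro a ha
    by_contra ha0
    obtain ⟨b, hb⟩ := hKf.mul_inv_cancel ha0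
    have ham : (a : R) ∈ m := by
      rwa [hψ, RingHom.comp_apply, Ideal.Quotient.eq_zero_iff_mem] at ha
    have h1 : (a : R) ^ p = 0 := hxp _ ham
    have h2 : (a : R) * (b : R) = 1 := congrArg Subtype.val hb
    have : (1 : R) = 0 := by
      calc (1 : R) = ((a : R) * (b : R)) ^ p := by rw [h2, one_pow]
      _ = (a : R) ^ p * (b : R) ^ p := mul_pow _ _ _
      _ = 0 := by rw [h1, zero_mul]
    exact one_ne_zero this
  have hsurj : Function.Surjective ψ := by
    intro y
    obtain ⟨r, rfl⟩ := Ideal.Quotient.mk_surjective y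
    obtain ⟨a, ha, b, hb, rfl⟩ := hKm r
    refine ⟨⟨a, ha⟩, ?_⟩
    rw [hψ, RingHom.comp_apply]
    show Ideal.Quotient.mk m a = Ideal.Quotient.mk m (a + b)
    rw [map_add, Ideal.Quotient.eq_zero_iff_mem.mpr hb, add_zero]
  exact ⟨RingEquiv.ofBijective ψ ⟨hinj, hsurj⟩⟩

end Main

theorem stmt0 {R : Type*} [CommRing R] [Nontrivial R] (p : ℕ) (hp : p.Prime)
    (hchar : ∃ k : ℕ, 1 ≤ k ∧ (p : R) ^ k = 0)
    (hds : DiffSimple R) :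
    (p : R) = 0 ∧
    ∃ m : Ideal R, m.IsMaximal ∧ (∀ m' : Ideal R, m'.IsMaximal → m' = m) ∧
      (∀ x ∈ m, x ^ p = 0) ∧
      (⨅ i ∈ {i : ℕ | 1 ≤ i}, m ^ i) = ⊥ ∧
      (IsNoetherianRing R →
        (∃ K : Subring R, IsField K ∧ ∀ r : R, ∃ a ∈ K, ∃ b ∈ m, r = a + b) ∧
        ∀ K : Subring R, IsField K → (∀ r : R, ∃ a ∈ K, ∃ b ∈ m, r = a + b) →
          Nonempty (K ≃+* R ⧸ m)) := by
  obtain ⟨hp0, m, hm, huniq, hxp, hinf⟩ := main_parts p hp hchar hds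
  exact ⟨hp0, m, hm, huniq, hxp, hinf, fun _ =>
    ⟨coeff_field_exists p hp hp0 m hm huniq hxp,
     fun K hKf hKm => coeff_field_unique p hp m hxp K hKf hKm⟩⟩
end

section
/- Let p be a prime, R a commutative 𝔽_p-algebra, δ a derivation of R, and x ∈ R an element with δ(x) = 1 and x^p = 0. Then the map ∂ : R → R defined by ∂(r) = δ(r) − (−1)^{p−1}·((p−1)!)^{−1}·x^{p−1}·δ^p(r) (where ((p−1)!)^{−1} is the inverse of the image of (p−1)! in 𝔽_p) is a derivation of R satisfying ∂(x) = 1 and ∂^p = 0. -/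
/-!
By Wilson's theorem the coefficient is `-1`, so `∂ = δ + N` with `N r = x^(p-1) δ^p(r)`. Both
summands are derivations (`δ^p` is one in characteristic `p`), and `∂ x = 1` since `δ^p x = 0`.
Since `δ^p` kills `x` it commutes with multiplication by `x^(p-1)`, and `δ^j (x^(p-1) s)` is
divisible by `x^(p-1-j)`; with `x^p = 0` this gives `N δ^j N = 0` for `j < p - 1`. Hence
`∂^p = δ^p + ∑ δ^i N δ^(p-1-i)`, and by the hockey-stick identity the sum collapses modulo `p` to
`δ^(p-1)(x^(p-1)) δ^p = (p-1)! δ^p = -δ^p`.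
-/

open Finset Function Nat

theorem add_pow_succ_eq_of_mul_pow_mul_eq_zero {A : Type*} [Semiring A] {a b : A} {n : ℕ}
    (h : ∀ j < n, b * a ^ j * b = 0) :
    (a + b) ^ (n + 1) = a ^ (n + 1) + ∑ i ∈ range (n + 1), a ^ i * b * a ^ (n - i) := by
  induction n with
  | zero => simp
  | succ n ih =>
    have hb : ∀ i ∈ range (n + 1), a ^ i * b * a ^ (n - i) * b = 0 := fun i _ => by
      rw [mul_assoc, mul_assoc, ← mul_assoc b, h (n - i) (by omega), mul_zero]
    have ha : ∀ i ∈ range (n + 1), a ^ i * b * a ^ (n - i) * a = a ^ i * b * a ^ (n + 1 - i) :=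
      fun i hi => by rw [mul_assoc, ← pow_succ, Nat.sub_add_comm (mem_range_succ_iff.mp hi)]
    rw [pow_succ, ih fun j hj => h j (by omega), add_mul, mul_add, mul_add, sum_mul, sum_mul,
      sum_congr rfl ha, sum_eq_zero hb, sum_range_succ _ (n + 1), Nat.sub_self, pow_zero,
      mul_one, ← pow_succ]
    abel

theorem cast_factorial_sub_one_eq_neg_one_of_charP {R : Type*} [Ring R] {p : ℕ} (hp : p.Prime)
    [CharP R p] : ((p - 1)! : R) = -1 := by
  have := Fact.mk hp
  have h := congrArg (ZMod.castHom (dvd_refl p) R) (ZMod.wilsons_lemma p)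
  rwa [map_natCast, map_neg, map_one] at h

theorem neg_one_pow_sub_one_mul_castHom_inv_factorial {R : Type*} [Ring R] {p : ℕ}
    (hp : p.Prime) [CharP R p] :
    (-1 : R) ^ (p - 1) * ZMod.castHom (dvd_refl p) R (((p - 1)! : ZMod p)⁻¹) = -1 := by
  have := Fact.mk hp
  have h : (-1 : ZMod p) ^ (p - 1) * ((p - 1)! : ZMod p)⁻¹ = -1 := by
    rw [ZMod.wilsons_lemma, ZMod.pow_card_sub_one_eq_one (neg_ne_zero.mpr one_ne_zero)]
    simp
  simpa using congrArg (ZMod.castHom (dvd_refl p) R) h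

namespace IsDerivation

variable {R : Type*}

section Ring

variable [Ring R] {δ : R → R}

def toIntLinearMap (h : IsDerivation δ) : Module.End ℤ R :=
  (AddMonoidHom.mk' δ h.1).toIntLinearMap

theorem map_zero (h : IsDerivation δ) : δ 0 = 0 :=
  _root_.map_zero h.toIntLinearMap

theorem map_sum (h : IsDerivation δ) {ι : Type*} (s : Finset ι) (f : ι → R) :
    δ (∑ i ∈ s, f i) = ∑ i ∈ s, δ (f i) :=
  _root_.map_sum h.toIntLinearMap f s

@[simp]
theorem coe_toIntLinearMap (h : IsDerivation δ) : ⇑h.toIntLinearMap = δ := rfl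

theorem iterate_eq_coe_pow (h : IsDerivation δ) (n : ℕ) : δ^[n] = ⇑(h.toIntLinearMap ^ n) := by
  rw [Module.End.coe_pow, coe_toIntLinearMap]

theorem iterate_map_zero (h : IsDerivation δ) (n : ℕ) : δ^[n] 0 = 0 := by
  rw [h.iterate_eq_coe_pow, _root_.map_zero]

theorem iterate_map_add (h : IsDerivation δ) (n : ℕ) (a b : R) :
    δ^[n] (a + b) = δ^[n] a + δ^[n] b := by
  rw [h.iterate_eq_coe_pow, _root_.map_add]

theorem map_one (h : IsDerivation δ) : δ 1 = 0 := by
  simpa using h.2 1 1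

theorem iterate_map_one (h : IsDerivation δ) {n : ℕ} (hn : n ≠ 0) : δ^[n] 1 = 0 := by
  obtain ⟨n, rfl⟩ := exists_eq_add_one_of_ne_zero hn
  rw [iterate_succ_apply, h.map_one, h.iterate_map_zero]

theorem map_natCast (h : IsDerivation δ) (n : ℕ) : δ n = 0 := by
  induction n with
  | zero => rw [Nat.cast_zero, h.map_zero]
  | succ n ih => rw [Nat.cast_succ, h.1, ih, h.map_one, add_zero]

theorem map_natCast_mul (h : IsDerivation δ) (n : ℕ) (a : R) : δ (n * a) = n * δ a := by
  rw [h.2, h.map_natCast, zero_mul, zero_add]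

theorem iterate_map_natCast_mul (h : IsDerivation δ) (n k : ℕ) (a : R) :
    δ^[k] (n * a) = n * δ^[k] a := by
  induction k generalizing a with
  | zero => rfl
  | succ k ih => rw [iterate_succ_apply, h.map_natCast_mul, ih, iterate_succ_apply]

theorem map_pow_eq_zero (h : IsDerivation δ) {x : R} (hx : δ x = 0) (n : ℕ) : δ (x ^ n) = 0 := by
  induction n with
  | zero => rw [pow_zero, h.map_one]
  | succ n ih => rw [pow_succ, h.2, ih, hx, zero_mul, mul_zero, add_zero]

theorem iterate_mul (h : IsDerivation δ) (n : ℕ) (a b : R) :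
    δ^[n] (a * b) = ∑ k ∈ range (n + 1), (n.choose k : R) * (δ^[k] a * δ^[n - k] b) := by
  induction n with
  | zero => simp
  | succ n ih =>
    have hterm : ∀ k ∈ range (n + 1), δ ((n.choose k : R) * (δ^[k] a * δ^[n - k] b)) =
        n.choose k * (δ^[k] a * δ^[n + 1 - k] b) + n.choose k * (δ^[k + 1] a * δ^[n - k] b) :=
      fun k hk => by
        rw [h.map_natCast_mul, h.2, Nat.sub_add_comm (mem_range_succ_iff.mp hk),
          iterate_succ_apply', iterate_succ_apply', mul_add, add_comm]
    rw [iterate_succ_apply', ih, h.map_sum, sum_congr rfl hterm, sum_add_distrib,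
      ← sum_choose_succ_mul (fun i j => δ^[i] a * δ^[j] b)]

theorem add {δ' : R → R} (h : IsDerivation δ) (h' : IsDerivation δ') :
    IsDerivation fun r => δ r + δ' r :=
  ⟨fun a b => by beta_reduce; rw [h.1, h'.1]; abel,
    fun a b => by beta_reduce; rw [h.2, h'.2]; noncomm_ring⟩

theorem iterate_apply_eq_zero_of_map_eq_one (h : IsDerivation δ) {x : R} (hx : δ x = 1) {n : ℕ}
    (hn : 2 ≤ n) : δ^[n] x = 0 := by
  obtain ⟨n, rfl⟩ := exists_eq_add_one_of_ne_zero (by omega : n ≠ 0)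
  rw [iterate_succ_apply, hx, h.iterate_map_one (by omega)]

theorem iterate_prime {p : ℕ} (hp : p.Prime) [CharP R p] (h : IsDerivation δ) :
    IsDerivation δ^[p] := by
  refine ⟨h.iterate_map_add p, fun a b => ?_⟩
  rw [h.iterate_mul, sum_eq_add_of_mem p 0 (self_mem_range_succ p)
    (mem_range.mpr (Nat.succ_pos p)) hp.ne_zero]
  · simp
  · intro k hk ⟨hkp, hk0⟩
    rw [CharP.cast_eq_zero_iff R p _ |>.mpr
      (hp.dvd_choose_self hk0 (lt_of_le_of_ne (mem_range_succ_iff.mp hk) hkp)), zero_mul]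

theorem sum_range_iterate_mul_iterate (h : IsDerivation δ) (n : ℕ) (a s : R) :
    ∑ i ∈ range (n + 1), δ^[i] (a * δ^[n - i] s) =
      ∑ m ∈ range (n + 1), ((n + 1).choose (m + 1) : R) * (δ^[m] a * δ^[n - m] s) :=
  calc ∑ i ∈ range (n + 1), δ^[i] (a * δ^[n - i] s)
      = ∑ i ∈ range (n + 1), ∑ m ∈ range (i + 1),
          (i.choose m : R) * (δ^[m] a * δ^[n - m] s) := by
        refine sum_congr rfl fun i hi => ?_
        rw [h.iterate_mul]
        refine sum_congr rfl fun m hm => ?_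
        rw [← iterate_add_apply, show i - m + (n - i) = n - m by
          have := mem_range.mp hi; have := mem_range.mp hm; omega]
    _ = ∑ m ∈ range (n + 1), ∑ i ∈ Ico m (n + 1),
          (i.choose m : R) * (δ^[m] a * δ^[n - m] s) := by
        simp_rw [range_eq_Ico]
        exact (sum_Ico_Ico_comm 0 (n + 1) _).symm
    _ = _ := sum_congr rfl fun m _ => by
        rw [← sum_mul, ← Nat.cast_sum, Ico_add_one_right_eq_Icc, Nat.sum_Icc_choose]

theorem sum_range_iterate_mul_iterate_prime {p : ℕ} (hp : p.Prime) [CharP R p]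
    (h : IsDerivation δ) (a s : R) :
    ∑ i ∈ range p, δ^[i] (a * δ^[p - 1 - i] s) = δ^[p - 1] a * s := by
  obtain ⟨n, rfl⟩ := exists_eq_add_one_of_ne_zero hp.ne_zero
  rw [Nat.add_sub_cancel, h.sum_range_iterate_mul_iterate,
    sum_eq_single_of_mem n (self_mem_range_succ n)]
  · simp
  · intro m hm hmn
    rw [CharP.cast_eq_zero_iff R (n + 1) _ |>.mpr (hp.dvd_choose_self (succ_ne_zero m)
      (by have := mem_range.mp hm; omega)), zero_mul]

end Ring

section CommRing

variable [CommRing R] {δ : R → R}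

theorem const_mul (h : IsDerivation δ) (c : R) : IsDerivation fun r => c * δ r :=
  ⟨fun a b => by beta_reduce; rw [h.1, mul_add], fun a b => by beta_reduce; rw [h.2]; ring⟩

theorem map_pow_succ (h : IsDerivation δ) (x : R) (n : ℕ) :
    δ (x ^ (n + 1)) = (n + 1 : ℕ) * x ^ n * δ x := by
  induction n with
  | zero => simp
  | succ n ih => rw [pow_succ, h.2, ih]; push_cast; ring

theorem pow_dvd_iterate_pow_add_mul (h : IsDerivation δ) (x s : R) (n j : ℕ) :
    x ^ n ∣ δ^[j] (x ^ (n + j) * s) := by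
  induction j generalizing n s with
  | zero => exact dvd_mul_right _ _
  | succ j ih =>
    have hstep : δ (x ^ (n + j + 1) * s) = x ^ (n + j) * ((n + j + 1 : ℕ) * δ x * s + x * δ s) := by
      rw [h.2, h.map_pow_succ]; ring
    rw [iterate_succ_apply, ← add_assoc, hstep]
    exact ih _ _

theorem iterate_pow_self (h : IsDerivation δ) {x : R} (hx : δ x = 1) (n : ℕ) :
    δ^[n] (x ^ n) = n ! := by
  induction n with
  | zero => simp
  | succ n ih =>
    rw [iterate_succ_apply, h.map_pow_succ, hx, mul_one, h.iterate_map_natCast_mul, ih,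
      factorial_succ, Nat.cast_mul]

theorem pow_mul_iterate_pow_mul_eq_zero (h : IsDerivation δ) {x : R} {m j : ℕ}
    (hx : x ^ (m + 1) = 0) (hj : j < m) (s : R) : x ^ m * δ^[j] (x ^ m * s) = 0 := by
  obtain ⟨c, hc⟩ := h.pow_dvd_iterate_pow_add_mul x s (m - j) j
  rw [Nat.sub_add_cancel hj.le] at hc
  rw [hc, ← mul_assoc, ← pow_add, pow_eq_zero_of_le (by omega) hx, zero_mul]

theorem iterate_add_pow_mul_iterate_prime_eq_zero {p : ℕ} (hp : p.Prime) [CharP R p]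
    (h : IsDerivation δ) {x : R} (hx : δ x = 1) (hxp : x ^ p = 0) (r : R) :
    (fun r => δ r + x ^ (p - 1) * δ^[p] r)^[p] r = 0 := by
  have hE := h.iterate_prime hp
  have hEx : δ^[p] x = 0 := h.iterate_apply_eq_zero_of_map_eq_one hx hp.two_le
  have hp1 : p - 1 + 1 = p := Nat.sub_add_cancel hp.one_le
  set d := h.toIntLinearMap
  set N : Module.End ℤ R := LinearMap.mulLeft ℤ (x ^ (p - 1)) * d ^ p
  have hNdN : ∀ j < p - 1, N * d ^ j * N = 0 := by
    intro j hj
    ext s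
    simp only [N, d, Module.End.mul_apply, ← h.iterate_eq_coe_pow, LinearMap.mulLeft_apply,
      LinearMap.zero_apply]
    rw [(Commute.iterate_iterate_self δ p j).eq, hE.2, hE.map_pow_eq_zero hEx, zero_mul,
      zero_add]
    exact h.pow_mul_iterate_pow_mul_eq_zero (hp1.symm ▸ hxp) hj _
  have hD : (fun r => δ r + x ^ (p - 1) * δ^[p] r) = ⇑(d + N) := by
    ext r
    simp [N, d, h.iterate_eq_coe_pow]
  rw [hD, ← Module.End.coe_pow, ← hp1, add_pow_succ_eq_of_mul_pow_mul_eq_zero hNdN, hp1]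
  simp only [N, d, LinearMap.add_apply, LinearMap.sum_apply, Module.End.mul_apply,
    ← h.iterate_eq_coe_pow, LinearMap.mulLeft_apply]
  simp_rw [(Commute.iterate_iterate_self δ p _).eq]
  rw [h.sum_range_iterate_mul_iterate_prime hp, h.iterate_pow_self hx,
    cast_factorial_sub_one_eq_neg_one_of_charP hp]
  ring

end CommRing

end IsDerivation

theorem stmt1 {R : Type*} [CommRing R] (p : ℕ) (hp : p.Prime) [CharP R p]
    (δ : R → R) (hδ : IsDerivation δ) (x : R) (hx1 : δ x = 1) (hxp : x ^ p = 0) :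
    ∀ D : R → R,
      (∀ r : R, D r = δ r - (-1 : R) ^ (p - 1) *
          (ZMod.castHom (dvd_refl p) R (((p - 1).factorial : ZMod p)⁻¹)) *
          x ^ (p - 1) * (δ^[p] r)) →
      IsDerivation D ∧ D x = 1 ∧ ∀ r : R, D^[p] r = 0 := by
  intro D hD
  obtain rfl : D = fun r => δ r + x ^ (p - 1) * δ^[p] r := funext fun r => by
    rw [hD, neg_one_pow_sub_one_mul_castHom_inv_factorial hp]
    ring
  refine ⟨hδ.add ((hδ.iterate_prime hp).const_mul _), ?_,
    hδ.iterate_add_pow_mul_iterate_prime_eq_zero hp hx1 hxp⟩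
  beta_reduce
  rw [hx1, hδ.iterate_apply_eq_zero_of_map_eq_one hx1 hp.two_le, mul_zero, add_zero]
end

section
/- Let p be a prime, (R, m) a differentiably simple local Noetherian commutative 𝔽_p-algebra, n := dim_{R/m}(m/m²) ≥ 1, and let δ_1, …, δ_n be pairwise commuting derivations of R and x_1, …, x_n ∈ m with δ_i^p = 0 and δ_i(x_j) = δ_{ij} for all i, j. For each i let φ_i := Σ_{k=0}^{p−1} (−1)^k (x_i^k/k!) δ_i^k : R → R, and let φ := φ_1 ∘ ⋯ ∘ φ_n. Then the image k' := φ(R) is a coefficient field of R, i.e., k' is a subfield of R with R = k' + m; moreover φ is the projection of R onto k' and k' = ∩_{i=1}^n ker δ_i. -/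
/-- The composition `f 0 ∘ f 1 ∘ ⋯ ∘ f (n−1)` of a finite family of maps. -/
def compFamily {R : Type*} : (n : ℕ) → (Fin n → R → R) → (R → R)
  | 0, _ => id
  | n + 1, f => f 0 ∘ compFamily n (fun i => f i.succ)

/-!
For `a ∈ m` every derivation kills `a ^ p`, so `(a ^ p)` is a proper differential ideal and
`a ^ p = 0`. The derivations `δ_j` read off the coefficients of `∑ c_i x_i` modulo `m`, so the
`x_i` are independent in `m/m²`; counting dimensions and Nakayama, they generate `m`.

For a derivation `D` with `D t = 1`, the truncated Taylor operator `∑_{k<p} (-t)^k/k! D^k`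
telescopes twice: its image lies in `ker D` (using `D^p = 0` and `p = 0`), and it kills `t R`
(using `t^p = 0`). It fixes `ker D`, and it commutes with every derivation commuting with `D`
and killing `t`. Hence `φ` maps `R` into `K = ⋂ ker δ_i`, fixes `K` and kills `m = ∑ x_i R`.
So `K ∩ m = 0`, which makes `K` a field, and `r = φ r + (r - φ r)` with `r - φ r ∈ m`.
-/

open IsLocalRing

section Derivations

variable {R : Type*} [CommRing R]

def IsDerivation.toDerivation {δ : R → R} (h : IsDerivation δ) : Derivation ℤ R R :=
  Derivation.mk' (AddMonoidHom.mk' δ h.1).toIntLinearMap fun a b => by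
    simp [h.2]
    ring

namespace Derivation

variable (D : Derivation ℤ R R) {c t : R}

theorem map_mul_of_map_left_eq_zero (hc : D c = 0) (a : R) : D (c * a) = c * D a := by
  simp [D.leibniz, hc]

theorem iterate_map_mul_of_map_left_eq_zero (hc : D c = 0) (k : ℕ) (a : R) :
    (⇑D)^[k] (c * a) = c * (⇑D)^[k] a := by
  induction k generalizing a with
  | zero => rfl
  | succ k ih => simp only [Function.iterate_succ_apply, D.map_mul_of_map_left_eq_zero hc, ih]

theorem iterate_succ_map_mul_of_map_eq_one (ht : D t = 1) (k : ℕ) (a : R) :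
    (⇑D)^[k + 1] (t * a) = t * (⇑D)^[k + 1] a + (k + 1 : ℕ) * (⇑D)^[k] a := by
  induction k with
  | zero => simp [D.leibniz, ht, add_comm]
  | succ k ih =>
    rw [Function.iterate_succ_apply' _ (k + 1), ih, D.map_add, D.leibniz, D.leibniz, ht,
      D.map_natCast, Function.iterate_succ_apply' _ (k + 1), Function.iterate_succ_apply' _ k]
    simp only [smul_eq_mul]
    push_cast
    ring

end Derivation

end Derivations

theorem DiffSimple.eq_bot_or_eq_top {R : Type*} [CommRing R] (h : DiffSimple R) (I : Ideal R)
    (hI : ∀ D : Derivation ℤ R R, ∀ a ∈ I, D a ∈ I) : I = ⊥ ∨ I = ⊤ :=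
  h I fun _ hδ => hI hδ.toDerivation

theorem DiffSimple.pow_eq_zero_of_mem_maximalIdeal {R : Type*} [CommRing R] [IsLocalRing R]
    (h : DiffSimple R) (p : ℕ) [NeZero p] [CharP R p] {a : R}
    (ha : a ∈ maximalIdeal R) : a ^ p = 0 := by
  have hdiff (D : Derivation ℤ R R) (b : R) (hb : b ∈ Ideal.span {a ^ p}) :
      D b ∈ Ideal.span {a ^ p} := by
    obtain ⟨s, rfl⟩ := Ideal.mem_span_singleton'.mp hb
    have hDap : D (a ^ p) = 0 := by simp [D.leibniz_pow]
    rw [D.leibniz, hDap, smul_zero, zero_add, smul_eq_mul]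
    exact Ideal.mul_mem_right _ _ (Ideal.mem_span_singleton_self _)
  refine (h.eq_bot_or_eq_top _ hdiff).elim (fun hbot => ?_) fun htop => ?_
  · simpa [hbot] using Ideal.mem_span_singleton_self (a ^ p)
  · refine absurd ?_ (maximalIdeal.isMaximal R).ne_top
    rw [eq_top_iff, ← htop, Ideal.span_le, Set.singleton_subset_iff]
    exact Ideal.pow_mem_of_mem _ ha p (NeZero.pos p)

section TaylorProjection

variable {R : Type*} [CommRing R] (p : ℕ) [CharP R p]

variable (R) in
def invFactorial (k : ℕ) : R :=
  ZMod.castHom (dvd_refl p) R ((k.factorial : ZMod p)⁻¹)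

@[simp]
theorem invFactorial_zero : invFactorial R p 0 = 1 := by
  simp [invFactorial]

@[simp]
theorem Derivation.map_invFactorial (D : Derivation ℤ R R) (k : ℕ) :
    D (invFactorial R p k) = 0 := by
  rw [invFactorial, ZMod.castHom_apply, ← ZMod.intCast_cast, D.map_intCast]

theorem neg_one_pow_mul_invFactorial_succ_mul [Fact p.Prime] {k : ℕ} (hk : k + 1 < p) :
    (-1 : R) ^ (k + 1) * invFactorial R p (k + 1) * (k + 1 : ℕ) =
      -((-1 : R) ^ k * invFactorial R p k) := by
  have hunit : ((k + 1 : ℕ) : ZMod p) ≠ 0 := by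
    rw [Ne, ZMod.natCast_eq_zero_iff]
    exact fun hdvd => (Nat.le_of_dvd k.succ_pos hdvd).not_gt hk
  have hstep : invFactorial R p (k + 1) * (k + 1 : ℕ) = invFactorial R p k := by
    rw [invFactorial, invFactorial, ← map_natCast (ZMod.castHom (dvd_refl p) R), ← map_mul,
      Nat.factorial_succ, Nat.cast_mul, mul_inv_rev, mul_assoc, inv_mul_cancel₀ hunit, mul_one]
  linear_combination (-1 : R) ^ (k + 1) * hstep

def taylorProj (D : Derivation ℤ R R) (t r : R) : R :=
  ∑ k ∈ Finset.range p, (-1 : R) ^ k * invFactorial R p k * t ^ k * (⇑D)^[k] r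

variable {p} (D : Derivation ℤ R R) (t : R)

theorem taylorProj_add (a b : R) :
    taylorProj p D t (a + b) = taylorProj p D t a + taylorProj p D t b := by
  simp only [taylorProj, iterate_map_add, mul_add, Finset.sum_add_distrib]

theorem taylorProj_eq_self_of_map_eq_zero [NeZero p] {a : R} (ha : D a = 0) :
    taylorProj p D t a = a := by
  rw [taylorProj, Finset.sum_eq_single_of_mem 0 (Finset.mem_range.mpr (NeZero.pos p))]
  · simp
  · intro k _ hk
    obtain ⟨j, rfl⟩ := Nat.exists_eq_succ_of_ne_zero hk
    rw [Function.iterate_succ_apply, ha, iterate_map_zero, mul_zero]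

theorem taylorProj_zero [NeZero p] : taylorProj p D t 0 = 0 :=
  taylorProj_eq_self_of_map_eq_zero D t D.map_zero

theorem taylorProj_sub_mem_span [NeZero p] (r : R) : taylorProj p D t r - r ∈ Ideal.span {t} := by
  obtain ⟨q, rfl⟩ : ∃ q, p = q + 1 := Nat.exists_eq_succ_of_ne_zero (NeZero.ne p)
  rw [taylorProj, Finset.sum_range_succ', pow_zero, invFactorial_zero, pow_zero,
    Function.iterate_zero_apply, one_mul, one_mul, one_mul, add_sub_cancel_right]
  exact Ideal.sum_mem _ fun k _ => Ideal.mul_mem_right _ _ <| Ideal.mul_mem_left _ _ <|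
    Ideal.pow_mem_of_mem _ (Ideal.mem_span_singleton_self t) _ k.succ_pos

theorem Derivation.map_taylorProj [Fact p.Prime] (ht : D t = 1) (hDp : ∀ r, (⇑D)^[p] r = 0)
    (r : R) : D (taylorProj p D t r) = 0 := by
  set c : ℕ → R := fun k => (-1 : R) ^ k * invFactorial R p k
  have hc : ∀ k, D (c k) = 0 := fun k => by simp [c, D.leibniz, D.leibniz_pow]
  set U : ℕ → R := fun k => c k * k * t ^ (k - 1) * (⇑D)^[k] r
  have hterm : ∀ k < p, D (c k * t ^ k * (⇑D)^[k] r) = U k - U (k + 1) := by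
    intro k hk
    have hnext : c k * t ^ k * (⇑D)^[k + 1] r = -U (k + 1) := by
      rcases (Nat.succ_le_of_lt hk).eq_or_lt with rfl | hkp
      · simp only [U, hDp r, mul_zero, neg_zero]
      · simp only [U, c, Nat.add_sub_cancel]
        linear_combination (t ^ k * (⇑D)^[k + 1] r) *
          neg_one_pow_mul_invFactorial_succ_mul (R := R) p hkp
    calc D (c k * t ^ k * (⇑D)^[k] r) = U k + c k * t ^ k * (⇑D)^[k + 1] r := by
          rw [mul_assoc, D.map_mul_of_map_left_eq_zero (hc k), D.leibniz, D.leibniz_pow, ht,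
            ← Function.iterate_succ_apply' D k r]
          simp only [U, smul_eq_mul, nsmul_eq_mul]
          ring
      _ = U k - U (k + 1) := by rw [hnext, sub_eq_add_neg]
  rw [taylorProj, map_sum, Finset.sum_congr rfl fun k hk => hterm k (Finset.mem_range.mp hk),
    Finset.sum_range_sub']
  simp [U]

theorem taylorProj_mul_of_map_eq_zero {c : R} (hc : D c = 0) (a : R) :
    taylorProj p D t (c * a) = c * taylorProj p D t a := by
  simp only [taylorProj, D.iterate_map_mul_of_map_left_eq_zero hc, Finset.mul_sum]
  exact Finset.sum_congr rfl fun k _ => by ring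

theorem Derivation.map_taylorProj_of_commute (D' : Derivation ℤ R R)
    (hcomm : Function.Commute D' D) (ht : D' t = 0) (a : R) :
    D' (taylorProj p D t a) = taylorProj p D t (D' a) := by
  have hcoeff : ∀ k, D' ((-1 : R) ^ k * invFactorial R p k * t ^ k) = 0 := fun k => by
    simp [D'.leibniz, D'.leibniz_pow, ht]
  simp only [taylorProj, map_sum, D'.map_mul_of_map_left_eq_zero (hcoeff _),
    (hcomm.iterate_right _).eq]

theorem taylorProj_mul_self [Fact p.Prime] (ht : D t = 1) (htp : t ^ p = 0) (a : R) :
    taylorProj p D t (t * a) = 0 := by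
  obtain ⟨q, hq⟩ : ∃ q, p = q + 1 := Nat.exists_eq_succ_of_ne_zero (NeZero.ne p)
  set A : ℕ → R := fun k => (-1 : R) ^ k * invFactorial R p k * t ^ (k + 1) * (⇑D)^[k] a
  have hterm : ∀ k < q, (-1 : R) ^ (k + 1) * invFactorial R p (k + 1) * t ^ (k + 1) *
      (⇑D)^[k + 1] (t * a) = A (k + 1) - A k := by
    intro k hk
    rw [D.iterate_succ_map_mul_of_map_eq_one ht]
    simp only [A]
    linear_combination (t ^ (k + 1) * (⇑D)^[k] a) *
      neg_one_pow_mul_invFactorial_succ_mul (R := R) p (by omega : k + 1 < p)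
  have hAq : A q = 0 := by simp [A, ← hq, htp]
  rw [taylorProj, show Finset.range p = Finset.range (q + 1) by rw [hq], Finset.sum_range_succ',
    Finset.sum_congr rfl fun k hk => hterm k (Finset.mem_range.mp hk), Finset.sum_range_sub, hAq]
  simp [A]

end TaylorProjection

section CompFamily

variable {α : Type*}

theorem compFamily_succ_apply {m : ℕ} (f : Fin (m + 1) → α → α) (a : α) :
    compFamily (m + 1) f a = f 0 (compFamily m (fun i => f i.succ) a) :=
  rfl

theorem compFamily_apply_of_forall_eq {m : ℕ} (f : Fin m → α → α) {a : α}
    (h : ∀ j, f j a = a) : compFamily m f a = a := by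
  induction m with
  | zero => rfl
  | succ m ih => rw [compFamily_succ_apply, ih _ fun j => h j.succ, h 0]

theorem compFamily_map_add [Add α] {m : ℕ} (f : Fin m → α → α)
    (h : ∀ j a b, f j (a + b) = f j a + f j b) (a b : α) :
    compFamily m f (a + b) = compFamily m f a + compFamily m f b := by
  induction m with
  | zero => rfl
  | succ m ih => simp only [compFamily_succ_apply, ih _ fun j => h j.succ, h 0]

theorem compFamily_map_mul_left [Mul α] {m : ℕ} (f : Fin m → α → α) {c : α}
    (h : ∀ j a, f j (c * a) = c * f j a) (a : α) :
    compFamily m f (c * a) = c * compFamily m f a := by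
  induction m with
  | zero => rfl
  | succ m ih => simp only [compFamily_succ_apply, ih _ fun j => h j.succ, h 0]

theorem compFamily_sub_mem [Ring α] {m : ℕ} (f : Fin m → α → α) (I : Ideal α)
    (h : ∀ j a, f j a - a ∈ I) (a : α) : compFamily m f a - a ∈ I := by
  induction m with
  | zero => simp [compFamily]
  | succ m ih =>
    rw [compFamily_succ_apply, ← sub_add_sub_cancel]
    exact add_mem (h 0 _) (ih _ fun j => h j.succ)

theorem map_compFamily_eq_zero [Zero α] {m : ℕ} (f : Fin m → α → α)
    (hf0 : ∀ j, f j 0 = 0) (d : α → α) (t : Fin m) (hdt : ∀ a, d (f t a) = 0)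
    (hd : ∀ j ≠ t, ∀ a, d (f j a) = f j (d a)) (a : α) : d (compFamily m f a) = 0 := by
  induction m with
  | zero => exact t.elim0
  | succ m ih =>
    rw [compFamily_succ_apply]
    cases t using Fin.cases with
    | zero => exact hdt _
    | succ t =>
      rw [hd 0 (Fin.succ_ne_zero t).symm, ih _ (fun j => hf0 j.succ) t hdt
        (fun j hj => hd j.succ (Fin.succ_injective _ |>.ne hj)), hf0]

theorem compFamily_mul_left_eq_zero [MulZeroClass α] {m : ℕ} (f : Fin m → α → α)
    (hf0 : ∀ j, f j 0 = 0) (c : α) (t : Fin m) (ht : ∀ a, f t (c * a) = 0)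
    (hlater : ∀ j, t < j → ∀ a, f j (c * a) = c * f j a) (a : α) :
    compFamily m f (c * a) = 0 := by
  induction m with
  | zero => exact t.elim0
  | succ m ih =>
    rw [compFamily_succ_apply]
    cases t using Fin.cases with
    | zero =>
      rw [compFamily_map_mul_left _ fun j => hlater j.succ (Fin.succ_pos j)]
      exact ht _
    | succ t =>
      rw [ih _ (fun j => hf0 j.succ) t ht
        (fun j hj => hlater j.succ (Fin.succ_lt_succ_iff.mpr hj)), hf0]

end CompFamily

section Cotangent

variable {R : Type*} [CommRing R]

theorem Derivation.map_mem_of_mem_sq (D : Derivation ℤ R R) {I : Ideal R} {a : R}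
    (ha : a ∈ I ^ 2) : D a ∈ I := by
  rw [pow_two] at ha
  refine Submodule.mul_induction_on ha (fun b hb c hc => ?_) fun b c hb hc => ?_
  · rw [D.leibniz, smul_eq_mul, smul_eq_mul]
    exact add_mem (I.mul_mem_right _ hb) (I.mul_mem_right _ hc)
  · rw [D.map_add]
    exact add_mem hb hc

variable [IsLocalRing R] {ι : Type*} [Fintype ι] [DecidableEq ι]

theorem linearIndependent_toCotangent_of_derivation_dual (D : ι → Derivation ℤ R R)
    (x : ι → R) (hx : ∀ i, x i ∈ maximalIdeal R)
    (hDx : ∀ i j, D i (x j) = if i = j then 1 else 0) :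
    LinearIndependent (ResidueField R) fun i => (maximalIdeal R).toCotangent ⟨x i, hx i⟩ := by
  rw [Fintype.linearIndependent_iff]
  intro g hg j
  obtain ⟨c, rfl⟩ : ∃ c : ι → R, (fun i => residue R (c i)) = g :=
    ⟨fun i => (residue_surjective (g i)).choose,
      funext fun i => (residue_surjective (g i)).choose_spec⟩
  have hsq : ∑ i, c i * x i ∈ maximalIdeal R ^ 2 := by
    simp only [← ResidueField.algebraMap_eq, algebraMap_smul, ← map_smul, ← map_sum,
      Ideal.toCotangent_eq_zero] at hg
    simpa using hg
  have hDsum : D j (∑ i, c i * x i) = ∑ i, x i * D j (c i) + c j := by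
    simp [map_sum, Derivation.leibniz, hDx, Finset.sum_add_distrib, mul_comm]
  have hcj : c j = D j (∑ i, c i * x i) - ∑ i, x i * D j (c i) := by rw [hDsum]; ring
  rw [residue_eq_zero_iff, hcj]
  exact sub_mem ((D j).map_mem_of_mem_sq hsq)
    (Ideal.sum_mem _ fun i _ => Ideal.mul_mem_right _ _ (hx i))

theorem maximalIdeal_eq_span_of_derivation_dual [IsNoetherianRing R]
    (D : ι → Derivation ℤ R R) (x : ι → R) (hx : ∀ i, x i ∈ maximalIdeal R)
    (hDx : ∀ i j, D i (x j) = if i = j then 1 else 0)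
    (hcard : Fintype.card ι = Module.finrank (ResidueField R) (CotangentSpace R)) :
    maximalIdeal R = Ideal.span (Set.range x) := by
  have hspan := (linearIndependent_toCotangent_of_derivation_dual D x hx hDx)
    |>.span_eq_top_of_card_eq_finrank' hcard
  rw [Set.range_comp' (maximalIdeal R).toCotangent, CotangentSpace.span_image_eq_top_iff] at hspan
  have := congrArg (Submodule.map (maximalIdeal R).subtype) hspan
  rwa [Submodule.map_span, Submodule.map_top, Submodule.range_subtype, ← Set.range_comp,
    eq_comm] at this

end Cotangent

section Constants

variable {R : Type*} [CommRing R] {ι : Type*}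

def Derivation.commonConstants (D : ι → Derivation ℤ R R) : Subring R where
  carrier := {a | ∀ i, D i a = 0}
  mul_mem' ha hb i := by simp [(D i).leibniz, ha i, hb i]
  one_mem' i := (D i).map_one_eq_zero
  add_mem' ha hb i := by simp [ha i, hb i]
  zero_mem' i := (D i).map_zero
  neg_mem' ha i := by simp [ha i]

theorem Derivation.isField_commonConstants [IsLocalRing R] (D : ι → Derivation ℤ R R)
    (h : ∀ a ∈ commonConstants D, a ∈ maximalIdeal R → a = 0) :
    IsField (commonConstants D) := by
  refine ⟨⟨0, 1, zero_ne_one⟩, mul_comm, fun {a} ha => ?_⟩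
  have hunit : IsUnit (a : R) := by
    by_contra hnu
    exact ha (Subtype.ext (h a a.2 ((mem_maximalIdeal _).mpr hnu)))
  obtain ⟨b, hab⟩ := hunit.exists_right_inv
  have hb : b ∈ commonConstants D := fun i => by
    rw [(D i).leibniz_of_mul_eq_one ((mul_comm b a).trans hab), a.2 i, smul_zero]
  exact ⟨⟨b, hb⟩, Subtype.ext hab⟩

end Constants

section TaylorProjComp

variable {R : Type*} [CommRing R] (p : ℕ) [CharP R p] {n : ℕ}

def taylorProjComp (D : Fin n → Derivation ℤ R R) (x : Fin n → R) : R → R :=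
  compFamily n fun i => taylorProj p (D i) (x i)

variable {p} (D : Fin n → Derivation ℤ R R) (x : Fin n → R)

theorem taylorProjComp_add (a b : R) :
    taylorProjComp p D x (a + b) = taylorProjComp p D x a + taylorProjComp p D x b :=
  compFamily_map_add _ (fun i => taylorProj_add (D i) (x i)) a b

theorem taylorProjComp_eq_self [NeZero p] {a : R} (ha : a ∈ Derivation.commonConstants D) :
    taylorProjComp p D x a = a :=
  compFamily_apply_of_forall_eq _ fun i => taylorProj_eq_self_of_map_eq_zero (D i) (x i) (ha i)

theorem taylorProjComp_sub_mem [NeZero p] {I : Ideal R} (hx : ∀ i, x i ∈ I) (r : R) :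
    taylorProjComp p D x r - r ∈ I :=
  compFamily_sub_mem _ I (fun i a => (Ideal.span_singleton_le_iff_mem I).mpr (hx i)
    (taylorProj_sub_mem_span (D i) (x i) a)) r

variable [Fact p.Prime] {D x}

theorem taylorProjComp_mem_commonConstants (hDx : ∀ i j, D i (x j) = if i = j then 1 else 0)
    (hcomm : ∀ i j, Function.Commute (D i) (D j))
    (hDp : ∀ i r, (⇑(D i))^[p] r = 0) (r : R) :
    taylorProjComp p D x r ∈ Derivation.commonConstants D := fun i =>
  map_compFamily_eq_zero _ (fun j => taylorProj_zero (D j) (x j)) (D i) i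
    ((D i).map_taylorProj (x i) (by simp [hDx]) (hDp i))
    (fun j hj => Derivation.map_taylorProj_of_commute (D j) (x j) (D i) (hcomm i j)
      (by simp [hDx, hj.symm]))
    r

theorem taylorProjComp_mul_eq_zero (hDx : ∀ i j, D i (x j) = if i = j then 1 else 0)
    (hxp : ∀ i, x i ^ p = 0) (i : Fin n) (a : R) :
    taylorProjComp p D x (x i * a) = 0 :=
  compFamily_mul_left_eq_zero _ (fun j => taylorProj_zero (D j) (x j)) (x i) i
    (taylorProj_mul_self (D i) (x i) (by simp [hDx]) (hxp i))
    (fun j hj => taylorProj_mul_of_map_eq_zero (D j) (x j) (by simp [hDx, hj.ne'])) a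

end TaylorProjComp

open IsLocalRing in
theorem stmt8_general {R : Type*} [CommRing R] [IsLocalRing R] [IsNoetherianRing R]
    (p : ℕ) (hp : p.Prime) [CharP R p] (hds : DiffSimple R)
    (n : ℕ)
    (hdim : Module.finrank (ResidueField R) (CotangentSpace R) = n)
    (δ : Fin n → R → R) (hδ : ∀ i, IsDerivation (δ i))
    (hcomm : ∀ i j, δ i ∘ δ j = δ j ∘ δ i)
    (hδp : ∀ i, ∀ r : R, (δ i)^[p] r = 0)
    (x : Fin n → R) (hx : ∀ j, x j ∈ maximalIdeal R)
    (hδx : ∀ i j, δ i (x j) = if i = j then (1 : R) else 0)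
    -- the inverse of `k!` in `𝔽_p`, transported to `R`
    (finv : ℕ → R) (hfinv : ∀ k : ℕ, finv k =
      ZMod.castHom (dvd_refl p) R ((k.factorial : ZMod p)⁻¹))
    -- `φ_i := Σ_{k=0}^{p−1} (−1)^k (x_i^k/k!) δ_i^k`
    (φi : Fin n → R → R) (hφi : ∀ i, ∀ r : R, φi i r =
      ∑ k ∈ Finset.range p, (-1 : R) ^ k * finv k * (x i) ^ k * (δ i)^[k] r)
    -- `φ := φ_1 ∘ ⋯ ∘ φ_n`
    (φ : R → R) (hφ : φ = compFamily n φi) :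
    -- `k' := φ(R)` is a coefficient field of `R`
    (∃ K : Subring R, (K : Set R) = Set.range φ ∧ IsField K ∧
      ∀ r : R, ∃ a ∈ K, ∃ b ∈ maximalIdeal R, r = a + b) ∧
    -- `φ` is the projection of `R` onto `k'` along `m`
    (∀ a b : R, a ∈ Set.range φ → b ∈ maximalIdeal R → φ (a + b) = a) ∧
    -- `k' = ∩_{i=1}^n ker δ_i`
    Set.range φ = {a : R | ∀ i, δ i a = 0} := by
  have : Fact p.Prime := ⟨hp⟩
  obtain ⟨D, rfl⟩ : ∃ D : Fin n → Derivation ℤ R R, δ = fun i => ⇑(D i) :=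
    ⟨fun i => (hδ i).toDerivation, rfl⟩
  obtain rfl : finv = invFactorial R p := funext hfinv
  obtain rfl : φ = taylorProjComp p D x :=
    hφ.trans (congrArg _ (funext fun i => funext (hφi i)))
  set K := Derivation.commonConstants D
  have hxp : ∀ i, x i ^ p = 0 := fun i => hds.pow_eq_zero_of_mem_maximalIdeal p (hx i)
  have hφm : ∀ b ∈ maximalIdeal R, taylorProjComp p D x b = 0 := by
    rw [maximalIdeal_eq_span_of_derivation_dual D x hx hδx (by simp [hdim])]
    rintro b hb
    obtain ⟨u, rfl⟩ := Ideal.mem_span_range_iff_exists_fun.mp hb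
    refine (map_sum (AddMonoidHom.mk' _ (taylorProjComp_add D x)) _ _).trans ?_
    exact Finset.sum_eq_zero fun i _ => by
      simpa [mul_comm] using taylorProjComp_mul_eq_zero hδx hxp i (u i)
  have hKm : ∀ a ∈ K, a ∈ maximalIdeal R → a = 0 := fun a ha ham =>
    (taylorProjComp_eq_self D x ha).symm.trans (hφm a ham)
  have hφK : ∀ r, taylorProjComp p D x r ∈ K :=
    taylorProjComp_mem_commonConstants hδx (fun i j => congrFun (hcomm i j)) hδp
  have hrange : Set.range (taylorProjComp p D x) = K := Set.ext fun a =>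
    ⟨by rintro ⟨r, rfl⟩; exact hφK r, fun ha => ⟨a, taylorProjComp_eq_self D x ha⟩⟩
  refine ⟨⟨K, hrange.symm, Derivation.isField_commonConstants D hKm, fun r => ?_⟩, ?_,
    hrange⟩
  · refine ⟨_, hφK r, r - taylorProjComp p D x r, ?_, by ring⟩
    simpa using neg_mem (taylorProjComp_sub_mem D x hx r)
  · rintro a b ⟨r, rfl⟩ hb
    rw [taylorProjComp_add, hφm b hb, add_zero, taylorProjComp_eq_self D x (hφK r)]

open IsLocalRing in
theorem stmt8 {R : Type*} [CommRing R] [IsLocalRing R] [IsNoetherianRing R]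
    (p : ℕ) (hp : p.Prime) [CharP R p] (hds : DiffSimple R)
    (n : ℕ) (hn : 1 ≤ n)
    (hdim : Module.finrank (ResidueField R) (CotangentSpace R) = n)
    (δ : Fin n → R → R) (hδ : ∀ i, IsDerivation (δ i))
    (hcomm : ∀ i j, δ i ∘ δ j = δ j ∘ δ i)
    (hδp : ∀ i, ∀ r : R, (δ i)^[p] r = 0)
    (x : Fin n → R) (hx : ∀ j, x j ∈ maximalIdeal R)
    (hδx : ∀ i j, δ i (x j) = if i = j then (1 : R) else 0)
    -- the inverse of `k!` in `𝔽_p`, transported to `R`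
    (finv : ℕ → R) (hfinv : ∀ k : ℕ, finv k =
      ZMod.castHom (dvd_refl p) R ((k.factorial : ZMod p)⁻¹))
    -- `φ_i := Σ_{k=0}^{p−1} (−1)^k (x_i^k/k!) δ_i^k`
    (φi : Fin n → R → R) (hφi : ∀ i, ∀ r : R, φi i r =
      ∑ k ∈ Finset.range p, (-1 : R) ^ k * finv k * (x i) ^ k * (δ i)^[k] r)
    -- `φ := φ_1 ∘ ⋯ ∘ φ_n`
    (φ : R → R) (hφ : φ = compFamily n φi) :
    -- `k' := φ(R)` is a coefficient field of `R`
    (∃ K : Subring R, (K : Set R) = Set.range φ ∧ IsField K ∧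
      ∀ r : R, ∃ a ∈ K, ∃ b ∈ maximalIdeal R, r = a + b) ∧
    -- `φ` is the projection of `R` onto `k'` along `m`
    (∀ a b : R, a ∈ Set.range φ → b ∈ maximalIdeal R → φ (a + b) = a) ∧
    -- `k' = ∩_{i=1}^n ker δ_i`
    Set.range φ = {a : R | ∀ i, δ i a = 0} :=
  stmt8_general p hp hds n hdim δ hδ hcomm hδp x hx hδx finv hfinv φi hφi φ hφ
end

section
/- Let δ be a derivation of a ring A and let x^{[0]} = 1, x^{[1]}, …, x^{[m]} be a δ-descent. Then for each 0 ≤ i ≤ m, the kernel of δ^{i+1} equals ⊕_{j=0}^{i} A^δ x^{[j]} and also equals ⊕_{j=0}^{i} x^{[j]} A^δ, where A^δ := ker δ; in particular these sums are direct (as left, respectively right, A^δ-modules). -/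
/-- A `δ`-descent: a finite sequence `x^{[0]} = 1, x^{[1]}, …, x^{[m]}` with
`δ(x^{[i]}) = x^{[i−1]}`. -/
def IsDescent {A : Type*} [Ring A] (δ : A → A) (m : ℕ) (x : ℕ → A) : Prop :=
  x 0 = 1 ∧ ∀ i : ℕ, 1 ≤ i → i ≤ m → δ (x i) = x (i - 1)

theorem stmt10 {A : Type*} [Ring A] (δ : A → A) (hδ : IsDerivation δ)
    (m : ℕ) (x : ℕ → A) (hx : IsDescent δ m x) :
    ∀ i : ℕ, i ≤ m →
      -- `ker δ^{i+1} = ⊕_{j=0}^{i} A^δ x^{[j]}` (a direct sum of left `A^δ`-modules)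
      ((∀ a : A, δ^[i + 1] a = 0 ↔
          ∃! c : Fin (i + 1) → A, (∀ j, δ (c j) = 0) ∧
            a = ∑ j : Fin (i + 1), c j * x (j : ℕ)) ∧
      -- `ker δ^{i+1} = ⊕_{j=0}^{i} x^{[j]} A^δ` (a direct sum of right `A^δ`-modules)
       (∀ a : A, δ^[i + 1] a = 0 ↔
          ∃! c : Fin (i + 1) → A, (∀ j, δ (c j) = 0) ∧
            a = ∑ j : Fin (i + 1), x (j : ℕ) * c j)) := by
  obtain ⟨hadd, hmul⟩ := hδ
  obtain ⟨hx0, hxs⟩ := hx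
  have h0 : δ 0 = 0 := by
    have h := hadd 0 0
    rw [add_zero] at h
    exact (left_eq_add.mp h)
  have h1 : δ 1 = 0 := by
    have h := hmul 1 1
    simp only [one_mul, mul_one] at h
    exact (left_eq_add.mp h)
  have hsum : ∀ (n : ℕ) (f : Fin n → A), δ (∑ j, f j) = ∑ j, δ (f j) :=
    fun n f => map_sum (AddMonoidHom.mk' δ hadd) f Finset.univ
  have hsub : ∀ a b : A, δ (a - b) = δ a - δ b :=
    fun a b => map_sub (AddMonoidHom.mk' δ hadd) a b
  -- derivative of a left combination
  have hdl : ∀ (n : ℕ), n ≤ m → ∀ (c : Fin (n+1) → A), (∀ j, δ (c j) = 0) →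
      δ (∑ j : Fin (n+1), c j * x (j:ℕ)) = ∑ j : Fin n, c j.succ * x (j:ℕ) := by
    intro n hn c hc
    rw [hsum]
    have e : ∀ j : Fin (n+1), δ (c j * x (j:ℕ)) = c j * δ (x (j:ℕ)) := by
      intro j
      rw [hmul, hc, zero_mul, zero_add]
    simp only [e]
    rw [Fin.sum_univ_succ]
    rw [show (((0:Fin (n+1))):ℕ) = 0 from rfl, hx0, h1, mul_zero, zero_add]
    refine Finset.sum_congr rfl fun j _ => ?_
    rw [show ((j.succ : Fin (n+1)):ℕ) = (j:ℕ)+1 from rfl,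
        hxs ((j:ℕ)+1) (by omega) (by have := j.isLt; omega), Nat.add_sub_cancel]
  -- derivative of a right combination
  have hdr : ∀ (n : ℕ), n ≤ m → ∀ (c : Fin (n+1) → A), (∀ j, δ (c j) = 0) →
      δ (∑ j : Fin (n+1), x (j:ℕ) * c j) = ∑ j : Fin n, x (j:ℕ) * c j.succ := by
    intro n hn c hc
    rw [hsum]
    have e : ∀ j : Fin (n+1), δ (x (j:ℕ) * c j) = δ (x (j:ℕ)) * c j := by
      intro j
      rw [hmul, hc, mul_zero, add_zero]
    simp only [e]
    rw [Fin.sum_univ_succ]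
    rw [show (((0:Fin (n+1))):ℕ) = 0 from rfl, hx0, h1, zero_mul, zero_add]
    refine Finset.sum_congr rfl fun j _ => ?_
    rw [show ((j.succ : Fin (n+1)):ℕ) = (j:ℕ)+1 from rfl,
        hxs ((j:ℕ)+1) (by omega) (by have := j.isLt; omega), Nat.add_sub_cancel]
  -- left combinations are in the kernel
  have L3 : ∀ i : ℕ, i ≤ m → ∀ c : Fin (i+1) → A, (∀ j, δ (c j) = 0) →
      δ^[i+1] (∑ j : Fin (i+1), c j * x (j:ℕ)) = 0 := by
    intro i
    induction i with
    | zero =>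
      intro _ c hc
      rw [Function.iterate_one, Fin.sum_univ_one,
        show (((0:Fin 1)):ℕ) = 0 from rfl, hx0, mul_one]
      exact hc 0
    | succ i ih =>
      intro him c hc
      rw [Function.iterate_succ_apply, hdl (i+1) him c hc]
      exact ih (Nat.le_of_succ_le him) (fun j => c j.succ) (fun j => hc j.succ)
  have R3 : ∀ i : ℕ, i ≤ m → ∀ c : Fin (i+1) → A, (∀ j, δ (c j) = 0) →
      δ^[i+1] (∑ j : Fin (i+1), x (j:ℕ) * c j) = 0 := by
    intro i
    induction i with
    | zero =>
      intro _ c hc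
      rw [Function.iterate_one, Fin.sum_univ_one,
        show (((0:Fin 1)):ℕ) = 0 from rfl, hx0, one_mul]
      exact hc 0
    | succ i ih =>
      intro him c hc
      rw [Function.iterate_succ_apply, hdr (i+1) him c hc]
      exact ih (Nat.le_of_succ_le him) (fun j => c j.succ) (fun j => hc j.succ)
  -- independence (left)
  have L2 : ∀ i : ℕ, i ≤ m → ∀ c : Fin (i+1) → A, (∀ j, δ (c j) = 0) →
      (∑ j : Fin (i+1), c j * x (j:ℕ)) = 0 → ∀ j, c j = 0 := by
    intro i
    induction i with
    | zero =>
      intro _ c hc hs0 j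
      rw [Fin.sum_univ_one, show (((0:Fin 1)):ℕ) = 0 from rfl, hx0, mul_one] at hs0
      rw [show j = 0 from Fin.ext (by have := j.isLt; omega)]
      exact hs0
    | succ i ih =>
      intro him c hc hs0 j
      have h1' : ∑ j : Fin (i+1), c j.succ * x (j:ℕ) = 0 := by
        rw [← hdl (i+1) him c hc, hs0, h0]
      have hzero : ∀ k : Fin (i+1), c k.succ = 0 :=
        ih (Nat.le_of_succ_le him) _ (fun k => hc k.succ) h1'
      have hc0 : c 0 = 0 := by
        rw [Fin.sum_univ_succ] at hs0
        simp only [hzero, zero_mul, Finset.sum_const_zero, add_zero] at hs0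
        rwa [show (((0:Fin (i+2))):ℕ) = 0 from rfl, hx0, mul_one] at hs0
      rcases Fin.eq_zero_or_eq_succ j with hj | ⟨k, hk⟩
      · rw [hj]; exact hc0
      · rw [hk]; exact hzero k
  have R2 : ∀ i : ℕ, i ≤ m → ∀ c : Fin (i+1) → A, (∀ j, δ (c j) = 0) →
      (∑ j : Fin (i+1), x (j:ℕ) * c j) = 0 → ∀ j, c j = 0 := by
    intro i
    induction i with
    | zero =>
      intro _ c hc hs0 j
      rw [Fin.sum_univ_one, show (((0:Fin 1)):ℕ) = 0 from rfl, hx0, one_mul] at hs0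
      rw [show j = 0 from Fin.ext (by have := j.isLt; omega)]
      exact hs0
    | succ i ih =>
      intro him c hc hs0 j
      have h1' : ∑ j : Fin (i+1), x (j:ℕ) * c j.succ = 0 := by
        rw [← hdr (i+1) him c hc, hs0, h0]
      have hzero : ∀ k : Fin (i+1), c k.succ = 0 :=
        ih (Nat.le_of_succ_le him) _ (fun k => hc k.succ) h1'
      have hc0 : c 0 = 0 := by
        rw [Fin.sum_univ_succ] at hs0
        simp only [hzero, mul_zero, Finset.sum_const_zero, add_zero] at hs0
        rwa [show (((0:Fin (i+2))):ℕ) = 0 from rfl, hx0, one_mul] at hs0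
      rcases Fin.eq_zero_or_eq_succ j with hj | ⟨k, hk⟩
      · rw [hj]; exact hc0
      · rw [hk]; exact hzero k
  -- existence (left)
  have L1 : ∀ i : ℕ, i ≤ m → ∀ a : A, δ^[i+1] a = 0 →
      ∃ c : Fin (i+1) → A, (∀ j, δ (c j) = 0) ∧ a = ∑ j : Fin (i+1), c j * x (j:ℕ) := by
    intro i
    induction i with
    | zero =>
      intro _ a ha
      rw [Function.iterate_one] at ha
      refine ⟨fun _ => a, fun j => ha, ?_⟩
      rw [Fin.sum_univ_one, show (((0:Fin 1)):ℕ) = 0 from rfl, hx0, mul_one]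
    | succ i ih =>
      intro him a ha
      rw [Function.iterate_succ_apply] at ha
      obtain ⟨c, hc, hda⟩ := ih (Nat.le_of_succ_le him) (δ a) ha
      set b : A := ∑ j : Fin (i+1), c j * x ((j:ℕ)+1) with hb
      have hdb : δ b = δ a := by
        rw [hb, hsum, hda]
        refine Finset.sum_congr rfl fun j _ => ?_
        rw [hmul, hc, zero_mul, zero_add,
            hxs ((j:ℕ)+1) (by omega) (by have := j.isLt; omega), Nat.add_sub_cancel]
      refine ⟨Fin.cases (a - b) c, ?_, ?_⟩
      · intro j
        induction j using Fin.cases with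
        | zero =>
          simp only [Fin.cases_zero]
          rw [hsub, hdb, sub_self]
        | succ k =>
          simp only [Fin.cases_succ]
          exact hc k
      · rw [Fin.sum_univ_succ]
        simp only [Fin.cases_zero, Fin.cases_succ]
        rw [show (((0:Fin (i+2))):ℕ) = 0 from rfl, hx0, mul_one]
        have hbb : ∑ j : Fin (i+1), c j * x ((j.succ : Fin (i+2)):ℕ) = b := by
          rw [hb]
          exact Finset.sum_congr rfl fun j _ => by rw [Fin.val_succ]
        rw [hbb]
        abel
  have R1 : ∀ i : ℕ, i ≤ m → ∀ a : A, δ^[i+1] a = 0 →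
      ∃ c : Fin (i+1) → A, (∀ j, δ (c j) = 0) ∧ a = ∑ j : Fin (i+1), x (j:ℕ) * c j := by
    intro i
    induction i with
    | zero =>
      intro _ a ha
      rw [Function.iterate_one] at ha
      refine ⟨fun _ => a, fun j => ha, ?_⟩
      rw [Fin.sum_univ_one, show (((0:Fin 1)):ℕ) = 0 from rfl, hx0, one_mul]
    | succ i ih =>
      intro him a ha
      rw [Function.iterate_succ_apply] at ha
      obtain ⟨c, hc, hda⟩ := ih (Nat.le_of_succ_le him) (δ a) ha
      set b : A := ∑ j : Fin (i+1), x ((j:ℕ)+1) * c j with hb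
      have hdb : δ b = δ a := by
        rw [hb, hsum, hda]
        refine Finset.sum_congr rfl fun j _ => ?_
        rw [hmul, hc, mul_zero, add_zero,
            hxs ((j:ℕ)+1) (by omega) (by have := j.isLt; omega), Nat.add_sub_cancel]
      refine ⟨Fin.cases (a - b) c, ?_, ?_⟩
      · intro j
        induction j using Fin.cases with
        | zero =>
          simp only [Fin.cases_zero]
          rw [hsub, hdb, sub_self]
        | succ k =>
          simp only [Fin.cases_succ]
          exact hc k
      · rw [Fin.sum_univ_succ]
        simp only [Fin.cases_zero, Fin.cases_succ]
        rw [show (((0:Fin (i+2))):ℕ) = 0 from rfl, hx0, one_mul]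
        have hbb : ∑ j : Fin (i+1), x ((j.succ : Fin (i+2)):ℕ) * c j = b := by
          rw [hb]
          exact Finset.sum_congr rfl fun j _ => by rw [Fin.val_succ]
        rw [hbb]
        abel
  intro i him
  constructor
  · intro a
    constructor
    · intro ha
      obtain ⟨c, hc, hac⟩ := L1 i him a ha
      refine ⟨c, ⟨hc, hac⟩, ?_⟩
      rintro d ⟨hd, had⟩
      have hdiff : ∀ j, d j - c j = 0 := by
        apply L2 i him (fun j => d j - c j) (fun j => by rw [hsub, hd, hc, sub_self])
        have e : ∑ j : Fin (i+1), (d j - c j) * x (j:ℕ)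
            = (∑ j : Fin (i+1), d j * x (j:ℕ)) - ∑ j : Fin (i+1), c j * x (j:ℕ) := by
          rw [← Finset.sum_sub_distrib]
          exact Finset.sum_congr rfl fun j _ => sub_mul _ _ _
        rw [e, ← had, ← hac, sub_self]
      funext j
      exact sub_eq_zero.mp (hdiff j)
    · rintro ⟨c, ⟨hc, hac⟩, -⟩
      rw [hac]
      exact L3 i him c hc
  · intro a
    constructor
    · intro ha
      obtain ⟨c, hc, hac⟩ := R1 i him a ha
      refine ⟨c, ⟨hc, hac⟩, ?_⟩
      rintro d ⟨hd, had⟩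
      have hdiff : ∀ j, d j - c j = 0 := by
        apply R2 i him (fun j => d j - c j) (fun j => by rw [hsub, hd, hc, sub_self])
        have e : ∑ j : Fin (i+1), x (j:ℕ) * (d j - c j)
            = (∑ j : Fin (i+1), x (j:ℕ) * d j) - ∑ j : Fin (i+1), x (j:ℕ) * c j := by
          rw [← Finset.sum_sub_distrib]
          exact Finset.sum_congr rfl fun j _ => mul_sub _ _ _
        rw [e, ← had, ← hac, sub_self]
      funext j
      exact sub_eq_zero.mp (hdiff j)
    · rintro ⟨c, ⟨hc, hac⟩, -⟩
      rw [hac]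
      exact R3 i him c hc
end

section
/- Let δ be a derivation of a ring A, A^δ := ker δ, and let x^{[0]} = 1, x^{[1]}, …, x^{[m]} be a δ-descent. Then a sequence x^{[0]'} = 1, x^{[1]'}, …, x^{[m]'} of elements of A is a δ-descent if and only if there exist elements λ_1, …, λ_m ∈ A^δ such that x^{[i]'} = x^{[i]} + Σ_{j=1}^{i} λ_j x^{[i−j]} for all 1 ≤ i ≤ m. -/
private def lamAux {A : Type*} [Ring A] (x y : ℕ → A) : ℕ → A
  | i => y i - x i -
      ∑ j ∈ (Finset.Icc 1 (i - 1)).attach, lamAux x y j.1 * x (i - j.1)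
decreasing_by
  have := Finset.mem_Icc.mp j.2; omega

private lemma lamAux_spec {A : Type*} [Ring A] (x y : ℕ → A) (i : ℕ) :
    lamAux x y i = y i - x i -
      ∑ j ∈ Finset.Icc 1 (i - 1), lamAux x y j * x (i - j) := by
  rw [lamAux, ← Finset.sum_attach (Finset.Icc 1 (i - 1)) (fun j => lamAux x y j * x (i - j))]

theorem stmt11 {A : Type*} [Ring A] (δ : A → A) (hδ : IsDerivation δ)
    (m : ℕ) (x : ℕ → A) (hx : IsDescent δ m x) (y : ℕ → A) (hy0 : y 0 = 1) :
    IsDescent δ m y ↔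
      ∃ lam : ℕ → A, (∀ j : ℕ, 1 ≤ j → j ≤ m → δ (lam j) = 0) ∧
        ∀ i : ℕ, 1 ≤ i → i ≤ m →
          y i = x i + ∑ j ∈ Finset.Icc 1 i, lam j * x (i - j) := by
  obtain ⟨hx0, hxd⟩ := hx
  have hDsub : ∀ a b : A, δ (a - b) = δ a - δ b := by
    have := (AddMonoidHom.mk' δ hδ.1).map_sub
    simpa using this
  have hDsum : ∀ (s : Finset ℕ) (f : ℕ → A), δ (∑ j ∈ s, f j) = ∑ j ∈ s, δ (f j) := by
    intro s f
    exact map_sum (AddMonoidHom.mk' δ hδ.1) f s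
  have hD1 : δ (1 : A) = 0 := by
    have := hδ.2 1 1
    simp at this
    exact this
  have hform : ∀ k, y k = x k + ∑ j ∈ Finset.Icc 1 k, lamAux x y j * x (k - j) := by
    intro k
    cases k with
    | zero => simp [hy0, hx0]
    | succ n =>
      rw [Finset.sum_Icc_succ_top (by omega : 1 ≤ n + 1)]
      have h := lamAux_spec x y (n + 1)
      simp only [Nat.add_sub_cancel] at h ⊢
      rw [Nat.sub_self, hx0, mul_one, h]
      abel
  constructor
  · rintro ⟨hy0', hyd⟩
    refine ⟨lamAux x y, ?_, fun i _ _ => hform i⟩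
    intro i
    induction i using Nat.strong_induction_on with
    | _ i IH =>
      intro h1 hm
      rw [lamAux_spec, hDsub, hDsub, hDsum, hyd i h1 hm, hxd i h1 hm]
      have hsum : ∑ j ∈ Finset.Icc 1 (i - 1), δ (lamAux x y j * x (i - j))
          = ∑ j ∈ Finset.Icc 1 (i - 1), lamAux x y j * x (i - 1 - j) := by
        apply Finset.sum_congr rfl
        intro j hj
        have hj' := Finset.mem_Icc.mp hj
        rw [hδ.2, IH j (by omega) (by omega) (by omega),
          hxd (i - j) (by omega) (by omega), show i - j - 1 = i - 1 - j by omega]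
        simp
      rw [hsum, hform (i - 1)]
      abel
  · rintro ⟨lam, hlam0, hlam⟩
    have hform' : ∀ k, k ≤ m → y k = x k + ∑ j ∈ Finset.Icc 1 k, lam j * x (k - j) := by
      intro k hk
      cases k with
      | zero => simp [hy0, hx0]
      | succ n => exact hlam (n + 1) (by omega) hk
    refine ⟨hy0, fun i h1 hm => ?_⟩
    obtain ⟨n, rfl⟩ : ∃ n, i = n + 1 := ⟨i - 1, by omega⟩
    rw [hform' (n + 1) hm, hδ.1, hDsum, hxd (n + 1) h1 hm,
      Finset.sum_Icc_succ_top (by omega : 1 ≤ n + 1)]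
    have htop : δ (lam (n + 1) * x ((n + 1) - (n + 1))) = 0 := by
      rw [Nat.sub_self, hx0, hδ.2, hlam0 (n + 1) (by omega) hm, hD1]
      simp
    have hsum : ∑ j ∈ Finset.Icc 1 n, δ (lam j * x (n + 1 - j))
        = ∑ j ∈ Finset.Icc 1 n, lam j * x (n - j) := by
      apply Finset.sum_congr rfl
      intro j hj
      have hj' := Finset.mem_Icc.mp hj
      rw [hδ.2, hlam0 j (by omega) (by omega),
        hxd (n + 1 - j) (by omega) (by omega), show n + 1 - j - 1 = n - j by omega]
      simp
    rw [htop, hsum, add_zero, Nat.add_sub_cancel, hform' n (by omega)]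
end

section
/- Let p be a prime, A an 𝔽_p-algebra, δ a derivation of A, and {x^{[i]} : 0 ≤ i < p^n} an iterative sequence in A with x^{[0]} = 1. Then δ(x^{[i]}) = x^{[i−1]} holds for all 1 ≤ i < p^n (i.e., the sequence is a δ-descent) if and only if δ(x^{[p^j]}) = x^{[p^j−1]} for all 0 ≤ j ≤ n−1. -/
lemma aux_not_dvd_choose (p : ℕ) (hp : p.Prime) :
    ∀ j i : ℕ, p ^ j ∣ i → ¬ p ∣ i / p ^ j → ¬ p ∣ Nat.choose i (p ^ j) := by
  haveI : Fact p.Prime := ⟨hp⟩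
  intro j
  induction j with
  | zero =>
    intro i _ h
    simpa [Nat.choose_one_right] using h
  | succ j ih =>
    rintro i ⟨m, rfl⟩ h
    have hp1 : 1 < p := hp.one_lt
    have hmne : ¬ p ∣ m := by
      rwa [Nat.mul_div_cancel_left m (by positivity)] at h
    have key : Nat.choose (p ^ (j+1) * m) (p ^ (j + 1)) ≡ Nat.choose (p ^ j * m) (p ^ j) [MOD p] := by
      have h0 := Choose.choose_modEq_choose_mod_mul_choose_div_nat
        (n := p ^ (j+1) * m) (k := p ^ (j+1)) (p := p)
      have e1 : p ^ (j+1) * m % p = 0 := by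
        simp [Nat.mul_mod, Nat.pow_mod, Nat.mod_self]
      have e2 : p ^ (j+1) % p = 0 := by
        simp [Nat.pow_mod, Nat.mod_self]
      have e3 : p ^ (j+1) * m / p = p ^ j * m := by
        rw [pow_succ, mul_comm (p ^ j) p, mul_assoc, Nat.mul_div_cancel_left _ hp.pos]
      have e4 : p ^ (j+1) / p = p ^ j := by
        rw [pow_succ, Nat.mul_div_cancel _ hp.pos]
      rw [e1, e2, e3, e4] at h0
      simpa using h0
    have hih : ¬ p ∣ Nat.choose (p ^ j * m) (p ^ j) := by
      apply ih
      · exact Dvd.intro m rfl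
      · rwa [Nat.mul_div_cancel_left m (by positivity)]
    intro hc
    apply hih
    rwa [Nat.dvd_iff_mod_eq_zero, ← key, ← Nat.dvd_iff_mod_eq_zero]

/-- An iterative sequence `{x^{[i]} : 0 ≤ i < p^n}` in a ring of characteristic `p`
(where by convention `x^{[k]} := 0` for `k ≥ p^n`). -/
def IsIterativeSeq (p n : ℕ) {R : Type*} [Ring R] (x : ℕ → R) : Prop :=
  (∀ k : ℕ, p ^ n ≤ k → x k = 0) ∧
  ∀ i < p ^ n, ∀ j < p ^ n, x i * x j = ((i + j).choose i : R) * x (i + j)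

theorem stmt14 {A : Type*} [Ring A] (p : ℕ) (hp : p.Prime) [CharP A p] (n : ℕ)
    (δ : A → A) (hδ : IsDerivation δ)
    (x : ℕ → A) (hx : IsIterativeSeq p n x) (hx0 : x 0 = 1) :
    (∀ i : ℕ, 1 ≤ i → i < p ^ n → δ (x i) = x (i - 1)) ↔
      (∀ j < n, δ (x (p ^ j)) = x (p ^ j - 1)) := by
  haveI : Fact p.Prime := ⟨hp⟩
  obtain ⟨hzero, hmulx⟩ := hx
  obtain ⟨hadd, hleib⟩ := hδ
  have hδ0 : δ 0 = 0 := by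
    have h2 : δ 0 = δ 0 + δ 0 := by simpa using hadd 0 0
    exact (left_eq_add.mp h2)
  have hδ1 : δ 1 = 0 := by
    have h2 : δ 1 = δ 1 + δ 1 := by simpa using hleib 1 1
    exact (left_eq_add.mp h2)
  have hδnat : ∀ m : ℕ, δ (m : A) = 0 := by
    intro m
    induction m with
    | zero => simpa using hδ0
    | succ k ih => push_cast; rw [hadd]; simp [ih, hδ1]
  constructor
  · intro h j hj
    exact h _ (Nat.one_le_pow _ _ hp.pos) (Nat.pow_lt_pow_right hp.one_lt hj)
  · intro h i
    induction i using Nat.strong_induction_on with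
    | _ i IH =>
    intro hi1 hin
    by_cases hpow : ∃ j, i = p ^ j
    · obtain ⟨j, rfl⟩ := hpow
      exact h j ((Nat.pow_lt_pow_iff_right hp.one_lt).mp hin)
    · set j := i.factorization p with hj
      set a := p ^ j with haj
      have hai : a ∣ i := Nat.ordProj_dvd i p
      have hia : ¬ p ∣ i / a := Nat.not_dvd_ordCompl hp (by omega)
      have hC : ¬ p ∣ i.choose a := aux_not_dvd_choose p hp j i hai hia
      have ha1 : 1 ≤ a := Nat.one_le_pow _ _ hp.pos
      have hale : a ≤ i := Nat.le_of_dvd (by omega) hai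
      have hane : a ≠ i := fun he => hpow ⟨j, he.symm⟩
      set b := i - a with hbdef
      have hb1 : 1 ≤ b := by omega
      have hab : a + b = i := by omega
      have halt : a < i := by omega
      have hblt : b < i := by omega
      -- inverse of the binomial coefficient in A
      obtain ⟨d, hd⟩ : ∃ d : ℕ, (d : A) * (i.choose a : A) = 1 := by
        have hu : (i.choose a : ZMod p) ≠ 0 := by
          simpa [ZMod.natCast_eq_zero_iff] using hC
        refine ⟨((i.choose a : ZMod p)⁻¹).val, ?_⟩
        have hc2 : ((((i.choose a : ZMod p)⁻¹).val : ℕ) : ZMod p) * (i.choose a : ZMod p) = 1 := by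
          rw [ZMod.natCast_val, ZMod.cast_id]
          exact inv_mul_cancel₀ hu
        calc ((((i.choose a : ZMod p)⁻¹).val : ℕ) : A) * (i.choose a : A)
            = (ZMod.castHom dvd_rfl A) (((((i.choose a : ZMod p)⁻¹).val : ℕ) : ZMod p)
                * (i.choose a : ZMod p)) := by rw [map_mul, map_natCast, map_natCast]
          _ = 1 := by rw [hc2, map_one]
      -- induction hypotheses
      have hxa : δ (x a) = x (a - 1) := IH a halt ha1 (by omega)
      have hxb : δ (x b) = x (b - 1) := IH b hblt hb1 (by omega)
      have e1 : x a * x b = (i.choose a : A) * x i := by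
        have := hmulx a (by omega) b (by omega)
        rwa [hab] at this
      have e2 : x (a - 1) * x b = ((i - 1).choose (a - 1) : A) * x (i - 1) := by
        have := hmulx (a - 1) (by omega) b (by omega)
        rwa [show a - 1 + b = i - 1 by omega] at this
      have e3 : x a * x (b - 1) = ((i - 1).choose a : A) * x (i - 1) := by
        have := hmulx a (by omega) (b - 1) (by omega)
        rwa [show a + (b - 1) = i - 1 by omega] at this
      have pascal : (i - 1).choose (a - 1) + (i - 1).choose a = i.choose a := by
        rw [show i = (i - 1) + 1 by omega, show a = (a - 1) + 1 by omega] at *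
        simp [Nat.choose_succ_succ]
      have main : (i.choose a : A) * δ (x i) = (i.choose a : A) * x (i - 1) := by
        have hL := congrArg δ e1
        rw [hleib, hleib, hxa, hxb, hδnat, e2, e3, zero_mul, zero_add] at hL
        rw [← hL, ← pascal, Nat.cast_add, add_mul]
      calc δ (x i) = ((d : A) * (i.choose a : A)) * δ (x i) := by rw [hd, one_mul]
        _ = (d : A) * ((i.choose a : A) * δ (x i)) := by rw [mul_assoc]
        _ = (d : A) * ((i.choose a : A) * x (i - 1)) := by rw [main]
        _ = ((d : A) * (i.choose a : A)) * x (i - 1) := by rw [mul_assoc]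
        _ = x (i - 1) := by rw [hd, one_mul]
end

section
/- (Uniqueness of the iterative δ-descent.) Let A be a commutative algebra over a field K of characteristic p > 0 and δ a K-derivation of A such that the ring A^δ := ker δ is reduced. If {x^{[i]} : 0 ≤ i < p^n} and {y^{[i]} : 0 ≤ i < p^n} are both iterative δ-descents of exponent n in A, then x^{[i]} = y^{[i]} for all 0 ≤ i < p^n. -/
/-- An iterative `δ`-descent of exponent `n`. -/
def IsIterativeDescent (p n : ℕ) {R : Type*} [Ring R] (δ : R → R) (x : ℕ → R) : Prop :=
  IsIterativeSeq p n x ∧ x 0 = 1 ∧ ∀ i : ℕ, 1 ≤ i → i < p ^ n → δ (x i) = x (i - 1)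

/-- The multinomial-type coefficient arising from iterated products `x i ^ k`. -/
def mcoef (i : ℕ) : ℕ → ℕ
  | 0 => 1
  | (k + 1) => (k * i + i).choose (k * i) * mcoef i k

/-- Powers of an element of an iterative sequence. -/
lemma iter_pow {p n : ℕ} {A : Type*} [CommRing A] {x : ℕ → A}
    (hx : IsIterativeSeq p n x) (h0 : x 0 = 1) {i : ℕ} (hi : i < p ^ n) :
    ∀ k : ℕ, x i ^ k = (mcoef i k : A) * x (k * i) := by
  intro k
  induction k with
  | zero => simp [mcoef, h0]
  | succ k ih =>
    rw [pow_succ, ih]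
    by_cases hk : k * i < p ^ n
    · have hrule := hx.2 (k * i) hk i hi
      have e : (k + 1) * i = k * i + i := by ring
      rw [mul_assoc, hrule, e, mcoef]
      push_cast
      ring
    · have h1 : x (k * i) = 0 := hx.1 _ (le_of_not_gt hk)
      have h2 : x ((k + 1) * i) = 0 := by
        apply hx.1
        have : k * i ≤ (k + 1) * i := by nlinarith
        omega
      rw [h1, h2]
      ring

/-- Uniqueness of the iterative `δ`-descent when `ker δ` is reduced. -/
theorem stmt16 {K A : Type*} [Field K] [CommRing A] [Algebra K A]
    (p : ℕ) (hp : p.Prime) [CharP K p]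
    (δ : A → A) (hδ : IsDerivation δ) (hδK : ∀ c : K, δ (algebraMap K A c) = 0)
    -- the ring `A^δ := ker δ` is reduced
    (hred : ∀ a : A, δ a = 0 → ∀ m : ℕ, a ^ m = 0 → a = 0)
    (n : ℕ) (x y : ℕ → A)
    (hx : IsIterativeDescent p n δ x) (hy : IsIterativeDescent p n δ y) :
    ∀ i < p ^ n, x i = y i := by
  obtain hA | hA := subsingleton_or_nontrivial A
  · intro i _; exact Subsingleton.elim _ _
  haveI : Fact p.Prime := ⟨hp⟩
  haveI : CharP A p := charP_of_injective_algebraMap (algebraMap K A).injective p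
  obtain ⟨hxs, hx0, hxd⟩ := hx
  obtain ⟨hys, hy0, hyd⟩ := hy
  have hδ0 : δ 0 = 0 := by
    have h := hδ.1 0 0
    simp only [add_zero] at h
    exact add_eq_left.mp h.symm
  have hsub : ∀ a b : A, δ (a - b) = δ a - δ b := by
    intro a b
    have hneg : δ (-b) = -δ b := by
      have h := hδ.1 b (-b)
      rw [add_neg_cancel, hδ0] at h
      exact (eq_neg_of_add_eq_zero_right h.symm)
    rw [sub_eq_add_neg, hδ.1, hneg, sub_eq_add_neg]
  intro i
  induction i with
  | zero => intro _; rw [hx0, hy0]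
  | succ i ih =>
    intro hi
    have hi' : i < p ^ n := Nat.lt_of_succ_lt hi
    have hprev : x i = y i := ih hi'
    have hz : δ (x (i + 1) - y (i + 1)) = 0 := by
      rw [hsub, hxd (i + 1) (by omega) hi, hyd (i + 1) (by omega) hi]
      simp [hprev]
    have hzp : (x (i + 1) - y (i + 1)) ^ (p ^ n) = 0 := by
      have hbig : p ^ n ≤ p ^ n * (i + 1) := Nat.le_mul_of_pos_right _ (by omega)
      rw [sub_pow_char_pow, iter_pow hxs hx0 hi, iter_pow hys hy0 hi,
        hxs.1 _ hbig, hys.1 _ hbig]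
      ring
    have := hred _ hz (p ^ n) hzp
    have := sub_eq_zero.mp this
    exact this
end
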